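/- arXiv:2106.08567 — 2 statements merged into one kernel-verified Lean document; each statement's English description precedes it below -/
import Mathlib

section
/- Duality between hockey-stick dominance and trade-off dominance: let μ, ν be probability measures on a measurable space Ω and P, Q probability measures on a measurable space Ω'. The following are equivalent: (i) H_α(μ‖ν) ≤ H_α(P‖Q) for all α ≥ 0; (ii) H_α(ν‖μ) ≤ H_α(Q‖P) for all α ≥ 0; (iii) T[μ,ν](x) ≥ T[P,Q](x) for all x ∈ [0,1]. -/
open MeasureTheory

/-- The hockey-stick divergence `H_α(P‖Q) = ∫ (p − α·q)₊ dμ` with `μ = P + Q`. -/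
noncomputable def hockeyStick {Ω : Type*} [MeasurableSpace Ω] (α : ℝ) (P Q : Measure Ω) : ℝ :=
  ∫ ω, max ((P.rnDeriv (P + Q) ω).toReal - α * (Q.rnDeriv (P + Q) ω).toReal) 0 ∂(P + Q)

/-- The trade-off function `T[P,Q](α) = inf {∫ (1−φ) dQ : φ : Ω → [0,1] measurable, ∫ φ dP ≤ α}`. -/
noncomputable def tradeOff {Ω : Type*} [MeasurableSpace Ω] (P Q : Measure Ω) (α : ℝ) : ℝ :=
  sInf {r : ℝ | ∃ φ : Ω → ℝ, Measurable φ ∧ (∀ ω, φ ω ∈ Set.Icc (0:ℝ) 1) ∧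
    (∫ ω, φ ω ∂P) ≤ α ∧ r = ∫ ω, (1 - φ ω) ∂Q}

/-!
Write `p, q` for the densities of `P, Q` with respect to `P + Q`. For every test `φ`,
`∫ φ dP - α ∫ φ dQ = ∫ (p - α q) φ ≤ H_α(P‖Q)`, with equality for the likelihood-ratio
tests (`φ = 1` where `α q < p`, `φ = 0` where `p < α q`). Hence
`T[Q,P](x) ≥ 1 - α x - H_α(P‖Q)`, and by the Neyman–Pearson lemma a randomized likelihood-ratio
test at a quantile `α` of `p / q` under `Q` attains this bound, so
`T[Q,P](x) = sup_{α ≥ 0} (1 - α x - H_α(P‖Q))`; conversely the test `1_{α q < p}`, of size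
`x = Q(α q < p)`, gives `H_α(P‖Q) ≤ 1 - α x - T[Q,P](x)`. Both formulas are monotone in the
other function, which gives (ii) ⇔ (iii).
Evaluating the two complementary likelihood-ratio tests `1_{p < α q}` and `1_{α q ≤ p}` gives
`H_α(P‖Q) = 1 - α + α H_{1/α}(Q‖P)`, which gives (i) ⇔ (ii).
-/

open Filter Topology
open scoped ENNReal

section

variable {Ω : Type*} [MeasurableSpace Ω]

section Quantile

variable {Q : Measure Ω} {f : Ω → ℝ} {α : ℝ} {x : ℝ≥0∞}

lemma measure_lt_le_of_forall_gt
    (h : ∀ β, α < β → Q {ω | β < f ω} ≤ x) : Q {ω | α < f ω} ≤ x := by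
  have hunion : {ω | α < f ω} = ⋃ n : ℕ, {ω | α + 1 / (n + 1) < f ω} := by
    ext ω
    simp only [Set.mem_ofPred_eq, Set.mem_iUnion]
    refine ⟨fun hω ↦ ?_, fun ⟨n, hn⟩ ↦ (lt_add_of_pos_right α Nat.one_div_pos_of_nat).trans hn⟩
    obtain ⟨n, hn⟩ := exists_nat_one_div_lt (sub_pos.2 hω)
    exact ⟨n, by linarith⟩
  have hmono : Monotone fun n : ℕ ↦ {ω | α + 1 / (n + 1) < f ω} := fun n m hnm ω hω ↦
    (add_le_add_right (Nat.one_div_le_one_div hnm) α).trans_lt hω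
  rw [hunion, hmono.measure_iUnion]
  exact iSup_le fun n ↦ h _ (lt_add_of_pos_right α Nat.one_div_pos_of_nat)

lemma le_measure_le_of_forall_lt [IsFiniteMeasure Q] (hf : Measurable f)
    (h : ∀ β < α, x ≤ Q {ω | β < f ω}) : x ≤ Q {ω | α ≤ f ω} := by
  have hsub : ⋂ n : ℕ, {ω | α - 1 / (n + 1) < f ω} ⊆ {ω | α ≤ f ω} := by
    intro ω hω
    simp only [Set.mem_iInter, Set.mem_ofPred_eq] at hω ⊢
    by_contra! hlt
    obtain ⟨n, hn⟩ := exists_nat_one_div_lt (sub_pos.2 hlt)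
    linarith [hω n]
  have hanti : Antitone fun n : ℕ ↦ {ω | α - 1 / (n + 1) < f ω} := fun n m hnm ω hω ↦
    (sub_le_sub_left (Nat.one_div_le_one_div hnm) α).trans_lt hω
  calc x ≤ ⨅ n : ℕ, Q {ω | α - 1 / (n + 1) < f ω} :=
        le_iInf fun n ↦ h _ (sub_lt_self α Nat.one_div_pos_of_nat)
    _ = Q (⋂ n : ℕ, {ω | α - 1 / (n + 1) < f ω}) :=
        (hanti.measure_iInter (fun n ↦ (measurableSet_lt measurable_const hf).nullMeasurableSet)
          ⟨0, measure_ne_top _ _⟩).symm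
    _ ≤ Q {ω | α ≤ f ω} := measure_mono hsub

lemma exists_measure_natCast_lt_le [IsFiniteMeasure Q] (hf : Measurable f) (hx : 0 < x) :
    ∃ n : ℕ, Q {ω | n < f ω} ≤ x := by
  have hanti : Antitone fun n : ℕ ↦ {ω | (n : ℝ) < f ω} := fun n m hnm ω (hω : (m : ℝ) < f ω) ↦
    (Nat.cast_le.2 hnm).trans_lt hω
  have hempty : ⋂ n : ℕ, {ω | (n : ℝ) < f ω} = ∅ := Set.eq_empty_of_forall_notMem fun ω hω ↦ by
    obtain ⟨n, hn⟩ := exists_nat_ge (f ω)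
    exact hn.not_gt (Set.mem_iInter.1 hω n)
  have hlim := tendsto_measure_iInter_atTop (μ := Q)
    (fun n ↦ (measurableSet_lt measurable_const hf).nullMeasurableSet) hanti ⟨0, measure_ne_top _ _⟩
  rw [hempty, measure_empty] at hlim
  exact (hlim.eventually (eventually_le_nhds hx)).exists

lemma exists_measure_lt_le_le_measure_le [IsFiniteMeasure Q] (hf : Measurable f)
    (hf₀ : ∀ ω, 0 ≤ f ω) (hx₀ : 0 < x) (hx : x ≤ Q Set.univ) :
    ∃ α, 0 ≤ α ∧ Q {ω | α < f ω} ≤ x ∧ x ≤ Q {ω | α ≤ f ω} := by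
  set S := {β | 0 ≤ β ∧ Q {ω | β < f ω} ≤ x}
  have hS : S.Nonempty := by
    obtain ⟨n, hn⟩ := exists_measure_natCast_lt_le (Q := Q) hf hx₀
    exact ⟨n, n.cast_nonneg, hn⟩
  refine ⟨sInf S, le_csInf hS fun β hβ ↦ hβ.1, measure_lt_le_of_forall_gt fun β hβ ↦ ?_,
    le_measure_le_of_forall_lt hf fun β hβ ↦ ?_⟩
  · obtain ⟨γ, ⟨-, hγ⟩, hγβ⟩ := exists_lt_of_csInf_lt hS hβ
    exact (measure_mono fun ω (hω : β < f ω) ↦ hγβ.trans hω).trans hγ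
  · rcases lt_or_ge β 0 with hβ₀ | hβ₀
    · have huniv : {ω | β < f ω} = Set.univ := Set.eq_univ_of_forall fun ω ↦ hβ₀.trans_le (hf₀ ω)
      rwa [huniv]
    · by_contra! hlt
      exact (csInf_le (⟨0, fun γ hγ ↦ hγ.1⟩ : BddBelow S) ⟨hβ₀, hlt.le⟩).not_gt hβ

end Quantile

noncomputable def rnDerivReal (P ρ : Measure Ω) (ω : Ω) : ℝ := (P.rnDeriv ρ ω).toReal

section Density

variable (P ρ : Measure Ω)

lemma measurable_rnDerivReal : Measurable (rnDerivReal P ρ) :=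
  (P.measurable_rnDeriv ρ).ennreal_toReal

lemma rnDerivReal_nonneg (ω : Ω) : 0 ≤ rnDerivReal P ρ ω := ENNReal.toReal_nonneg

variable {P ρ} [IsFiniteMeasure P]

lemma integrable_rnDerivReal : Integrable (rnDerivReal P ρ) ρ :=
  Measure.integrable_toReal_rnDeriv

variable [SigmaFinite ρ]

lemma integral_eq_integral_rnDerivReal_mul (h : P ≪ ρ) (φ : Ω → ℝ) :
    ∫ ω, φ ω ∂P = ∫ ω, rnDerivReal P ρ ω * φ ω ∂ρ :=
  (integral_rnDeriv_smul h).symm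

lemma integrable_rnDerivReal_mul (h : P ≪ ρ) {φ : Ω → ℝ} (hφ : Integrable φ P) :
    Integrable (fun ω ↦ rnDerivReal P ρ ω * φ ω) ρ :=
  (integrable_toReal_rnDeriv_mul_iff h).2 hφ

lemma ae_rnDerivReal_pos (h : P ≪ ρ) : ∀ᵐ ω ∂P, 0 < rnDerivReal P ρ ω := by
  filter_upwards [Measure.rnDeriv_pos h, h.ae_le (Measure.rnDeriv_lt_top P ρ)] with ω h₀ h₁
  exact ENNReal.toReal_pos h₀.ne' h₁.ne

end Density

section Test

variable {μ : Measure Ω} {φ : Ω → ℝ}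

lemma indicator_one_mem_Icc {α : Type*} (s : Set α) (a : α) :
    s.indicator (1 : α → ℝ) a ∈ Set.Icc (0 : ℝ) 1 := by
  by_cases h : a ∈ s <;> simp [h]

lemma Real.norm_le_one_of_mem_Icc {x : ℝ} (hx : x ∈ Set.Icc (0 : ℝ) 1) : ‖x‖ ≤ 1 := by
  rw [Real.norm_of_nonneg hx.1]
  exact hx.2

lemma integrable_of_mem_Icc [IsFiniteMeasure μ] (hφ : Measurable φ)
    (hφ₀₁ : ∀ ω, φ ω ∈ Set.Icc (0 : ℝ) 1) : Integrable φ μ :=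
  .of_bound hφ.aestronglyMeasurable 1 <| ae_of_all _ fun ω ↦ Real.norm_le_one_of_mem_Icc (hφ₀₁ ω)

lemma integral_one_sub [IsProbabilityMeasure μ] (hφ : Measurable φ)
    (hφ₀₁ : ∀ ω, φ ω ∈ Set.Icc (0 : ℝ) 1) : ∫ ω, (1 - φ ω) ∂μ = 1 - ∫ ω, φ ω ∂μ := by
  rw [integral_sub (integrable_const 1) (integrable_of_mem_Icc hφ hφ₀₁)]
  simp

lemma exists_test_integral_eq [IsFiniteMeasure μ] {A C : Set Ω}
    (hA : MeasurableSet A) (hC : MeasurableSet C) (hAC : A ⊆ C) {x : ℝ}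
    (hAx : μ.real A ≤ x) (hxC : x ≤ μ.real C) :
    ∃ φ : Ω → ℝ, Measurable φ ∧ (∀ ω, φ ω ∈ Set.Icc (0 : ℝ) 1) ∧ (∀ ω ∈ A, φ ω = 1) ∧
      (∀ ω ∉ C, φ ω = 0) ∧ ∫ ω, φ ω ∂μ = x := by
  have hB : MeasurableSet (C \ A) := hC.diff hA
  have hμB : μ.real (C \ A) = μ.real C - μ.real A := measureReal_sdiff hAC hA
  -- if `μ (C \ A) = 0` then `x = μ A`, and the junk value `γ = 0` is the right one
  set γ := (x - μ.real A) / μ.real (C \ A)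
  have hγ₀ : 0 ≤ γ := div_nonneg (sub_nonneg.2 hAx) measureReal_nonneg
  have hγ₁ : γ ≤ 1 := div_le_one_of_le₀ (by linarith) measureReal_nonneg
  refine ⟨fun ω ↦ A.indicator 1 ω + γ * (C \ A).indicator 1 ω,
    (measurable_one.indicator hA).add ((measurable_one.indicator hB).const_mul γ),
    fun ω ↦ ?_, fun ω hω ↦ by simp [hω], fun ω hω ↦ ?_, ?_⟩
  · by_cases hωA : ω ∈ A
    · simp [hωA]
    · by_cases hωC : ω ∈ C <;> simp [hωA, hωC, hγ₀, hγ₁]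
  · simp [hω, show ω ∉ A from fun h ↦ hω (hAC h)]
  · rw [integral_add (integrable_of_mem_Icc (measurable_one.indicator hA) (indicator_one_mem_Icc A))
      ((integrable_of_mem_Icc (measurable_one.indicator hB) (indicator_one_mem_Icc _)).const_mul γ),
      integral_const_mul,
      integral_indicator_one hA, integral_indicator_one hB]
    rcases eq_or_ne (μ.real (C \ A)) 0 with h | h
    · simp only [h, mul_zero, add_zero]
      linarith
    · rw [div_mul_cancel₀ _ h]
      ring

end Test

section HockeyStick

variable (P Q : Measure Ω)

lemma hockeyStick_eq_integral (α : ℝ) : hockeyStick α P Q =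
    ∫ ω, max (rnDerivReal P (P + Q) ω - α * rnDerivReal Q (P + Q) ω) 0 ∂(P + Q) := rfl

lemma measurableSet_mul_rnDerivReal_lt (α : ℝ) : MeasurableSet
    {ω | α * rnDerivReal Q (P + Q) ω < rnDerivReal P (P + Q) ω} :=
  measurableSet_lt ((measurable_rnDerivReal _ _).const_mul α) (measurable_rnDerivReal _ _)

variable [IsProbabilityMeasure P] [IsProbabilityMeasure Q] {φ : Ω → ℝ}

lemma integral_sub_mul_integral_eq (α : ℝ) (hφ : Measurable φ)
    (hφ₀₁ : ∀ ω, φ ω ∈ Set.Icc (0 : ℝ) 1) :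
    ∫ ω, φ ω ∂P - α * ∫ ω, φ ω ∂Q =
      ∫ ω, (rnDerivReal P (P + Q) ω - α * rnDerivReal Q (P + Q) ω) * φ ω ∂(P + Q) := by
  have hP : P ≪ P + Q := Measure.AbsolutelyContinuous.rfl.add_right Q
  have hQ : Q ≪ P + Q := Measure.AbsolutelyContinuous.rfl.add_right' P
  have hφ' {μ : Measure Ω} [IsFiniteMeasure μ] : Integrable φ μ := integrable_of_mem_Icc hφ hφ₀₁
  rw [integral_eq_integral_rnDerivReal_mul hP, integral_eq_integral_rnDerivReal_mul hQ,
    ← integral_const_mul, ← integral_sub (integrable_rnDerivReal_mul hP hφ')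
      ((integrable_rnDerivReal_mul hQ hφ').const_mul α)]
  congr 1 with ω
  ring

lemma integral_sub_mul_integral_le_hockeyStick (α : ℝ) (hφ : Measurable φ)
    (hφ₀₁ : ∀ ω, φ ω ∈ Set.Icc (0 : ℝ) 1) :
    ∫ ω, φ ω ∂P - α * ∫ ω, φ ω ∂Q ≤ hockeyStick α P Q := by
  have hp := integrable_rnDerivReal (P := P) (ρ := P + Q)
  have hq := integrable_rnDerivReal (P := Q) (ρ := P + Q)
  rw [integral_sub_mul_integral_eq P Q α hφ hφ₀₁, hockeyStick_eq_integral]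
  refine integral_mono ((hp.sub (hq.const_mul α)).mul_bdd hφ.aestronglyMeasurable
    (ae_of_all _ fun ω ↦ Real.norm_le_one_of_mem_Icc (hφ₀₁ ω)))
    (hp.sub (hq.const_mul α)).pos_part fun ω ↦ ?_
  obtain ⟨h₀, h₁⟩ := hφ₀₁ ω
  rcases le_total (rnDerivReal P (P + Q) ω - α * rnDerivReal Q (P + Q) ω) 0 with h | h
  · exact (mul_nonpos_of_nonpos_of_nonneg h h₀).trans (le_max_right _ _)
  · exact (mul_le_of_le_one_right h h₁).trans (le_max_left _ _)

lemma integral_sub_mul_integral_eq_hockeyStick {α : ℝ} (hφ : Measurable φ)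
    (hφ₀₁ : ∀ ω, φ ω ∈ Set.Icc (0 : ℝ) 1)
    (h₁ : ∀ ω, α * rnDerivReal Q (P + Q) ω < rnDerivReal P (P + Q) ω → φ ω = 1)
    (h₀ : ∀ ω, rnDerivReal P (P + Q) ω < α * rnDerivReal Q (P + Q) ω → φ ω = 0) :
    ∫ ω, φ ω ∂P - α * ∫ ω, φ ω ∂Q = hockeyStick α P Q := by
  rw [integral_sub_mul_integral_eq P Q α hφ hφ₀₁, hockeyStick_eq_integral]
  refine integral_congr_ae (ae_of_all _ fun ω ↦ ?_)
  rcases lt_trichotomy (α * rnDerivReal Q (P + Q) ω) (rnDerivReal P (P + Q) ω) with h | h | h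
  · simp [h₁ ω h, h.le]
  · simp [h]
  · simp [h₀ ω h, h.le]

lemma hockeyStick_eq_measureReal_sub (α : ℝ) :
    hockeyStick α P Q = P.real {ω | α * rnDerivReal Q (P + Q) ω < rnDerivReal P (P + Q) ω} -
      α * Q.real {ω | α * rnDerivReal Q (P + Q) ω < rnDerivReal P (P + Q) ω} := by
  have hs := measurableSet_mul_rnDerivReal_lt P Q α
  rw [← integral_indicator_one hs, ← integral_indicator_one hs]
  refine (integral_sub_mul_integral_eq_hockeyStick P Q (measurable_one.indicator hs)
    (indicator_one_mem_Icc _) (fun ω h ↦ ?_) (fun ω h ↦ ?_)).symm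
  · simp [h]
  · simp [h.le]

lemma hockeyStick_zero : hockeyStick 0 P Q = 1 := by
  have h := integral_sub_mul_integral_eq_hockeyStick P Q (φ := 1) (α := 0) measurable_one
    (fun _ ↦ ⟨zero_le_one, le_rfl⟩) (fun _ _ ↦ rfl)
    (fun ω h ↦ absurd h (by simpa using rnDerivReal_nonneg P (P + Q) ω))
  simpa using h.symm

lemma hockeyStick_eq_one_sub_add_mul_hockeyStick_swap {α : ℝ} (hα : 0 < α) :
    hockeyStick α P Q = 1 - α + α * hockeyStick α⁻¹ Q P := by
  set s := {ω | rnDerivReal P (P + Q) ω < α * rnDerivReal Q (P + Q) ω}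
  have hs : MeasurableSet s :=
    measurableSet_lt (measurable_rnDerivReal _ _) ((measurable_rnDerivReal _ _).const_mul α)
  have h₁ := integral_sub_mul_integral_eq_hockeyStick P Q (α := α)
    (measurable_one.indicator hs.compl) (indicator_one_mem_Icc _)
    (fun ω h ↦ by simp [s, h.le]) (fun ω h ↦ by simp [s, h])
  have h₂ := integral_sub_mul_integral_eq_hockeyStick Q P (α := α⁻¹)
    (measurable_one.indicator hs) (indicator_one_mem_Icc _)
    (fun ω h ↦ ?_) (fun ω h ↦ ?_)
  · rw [integral_indicator_one hs.compl, integral_indicator_one hs.compl,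
      probReal_compl_eq_one_sub hs, probReal_compl_eq_one_sub hs] at h₁
    rw [integral_indicator_one hs, integral_indicator_one hs] at h₂
    rw [← h₁, ← h₂]
    field_simp
    ring
  · rw [add_comm Q P, inv_mul_lt_iff₀ hα] at h
    simp [s, h]
  · rw [add_comm Q P, lt_inv_mul_iff₀ hα] at h
    simp [s, h.le]

end HockeyStick

section TradeOff

variable (P Q : Measure Ω) {x : ℝ}

lemma tradeOff_le_integral {φ : Ω → ℝ} (hφ : Measurable φ) (hφ₀₁ : ∀ ω, φ ω ∈ Set.Icc (0 : ℝ) 1)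
    (hx : ∫ ω, φ ω ∂P ≤ x) : tradeOff P Q x ≤ ∫ ω, (1 - φ ω) ∂Q := by
  refine csInf_le ⟨0, ?_⟩ ⟨φ, hφ, hφ₀₁, hx, rfl⟩
  rintro _ ⟨ψ, -, hψ₀₁, -, rfl⟩
  exact integral_nonneg fun ω ↦ sub_nonneg.2 (hψ₀₁ ω).2

variable [IsProbabilityMeasure Q]

lemma tradeOff_le_one_sub_measureReal {s : Set Ω} (hs : MeasurableSet s) (hx : P.real s ≤ x) :
    tradeOff P Q x ≤ 1 - Q.real s := by
  have hφ : Measurable (s.indicator (1 : Ω → ℝ)) := measurable_one.indicator hs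
  have h := tradeOff_le_integral P Q (x := x) hφ (indicator_one_mem_Icc s)
    (by rwa [integral_indicator_one hs])
  rwa [integral_one_sub hφ (indicator_one_mem_Icc s), integral_indicator_one hs] at h

variable [IsProbabilityMeasure P]

lemma one_sub_mul_sub_hockeyStick_le_tradeOff {α : ℝ} (hα : 0 ≤ α) (hx : 0 ≤ x) :
    1 - α * x - hockeyStick α P Q ≤ tradeOff Q P x := by
  refine le_csInf ⟨_, 0, measurable_const, fun _ ↦ ⟨le_rfl, zero_le_one⟩, by simpa, rfl⟩ ?_
  rintro _ ⟨φ, hφ, hφ₀₁, hφx, rfl⟩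
  have h := integral_sub_mul_integral_le_hockeyStick P Q α hφ hφ₀₁
  rw [integral_one_sub hφ hφ₀₁]
  linarith [mul_le_mul_of_nonneg_left hφx hα]

end TradeOff

section NeymanPearson

variable (P Q : Measure Ω) [IsProbabilityMeasure P] [IsProbabilityMeasure Q]

lemma tradeOff_le_one_sub_mul_sub_hockeyStick {α x : ℝ}
    (hAx : Q.real {ω | α * rnDerivReal Q (P + Q) ω < rnDerivReal P (P + Q) ω} ≤ x)
    (hxC : x ≤ Q.real {ω | α * rnDerivReal Q (P + Q) ω ≤ rnDerivReal P (P + Q) ω}) :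
    tradeOff Q P x ≤ 1 - α * x - hockeyStick α P Q := by
  obtain ⟨φ, hφ, hφ₀₁, hφA, hφC, hφx⟩ := exists_test_integral_eq
    (measurableSet_mul_rnDerivReal_lt P Q α)
    (measurableSet_le ((measurable_rnDerivReal Q (P + Q)).const_mul α)
      (measurable_rnDerivReal P (P + Q))) (fun _ h ↦ Set.mem_ofPred.2 (le_of_lt h)) hAx hxC
  have hH := integral_sub_mul_integral_eq_hockeyStick P Q hφ hφ₀₁ hφA
    fun ω h ↦ hφC ω (not_le.2 h)
  calc tradeOff Q P x ≤ ∫ ω, (1 - φ ω) ∂P := tradeOff_le_integral Q P hφ hφ₀₁ hφx.le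
    _ = 1 - α * x - hockeyStick α P Q := by
      rw [integral_one_sub hφ hφ₀₁, ← hH, hφx]
      ring

/-- As `α → ∞` the optimal tests decrease to the indicator of `⋂ n, {n q < p}`, which is
`Q`-null. -/
lemma tradeOff_zero_le_of_forall_natCast {t : ℝ}
    (ht : ∀ n : ℕ, 1 - hockeyStick n P Q ≤ t) : tradeOff Q P 0 ≤ t := by
  set A : ℕ → Set Ω := fun n ↦ {ω | n * rnDerivReal Q (P + Q) ω < rnDerivReal P (P + Q) ω}
  have hA (n : ℕ) : MeasurableSet (A n) := measurableSet_mul_rnDerivReal_lt P Q n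
  have hanti : Antitone A := fun n m hnm ω (hω : (m : ℝ) * _ < _) ↦
    (mul_le_mul_of_nonneg_right (Nat.cast_le.2 hnm) (rnDerivReal_nonneg _ _ ω)).trans_lt hω
  have hQ : Q (⋂ n, A n) = 0 := by
    rw [measure_eq_zero_iff_ae_notMem]
    filter_upwards [ae_rnDerivReal_pos (Measure.AbsolutelyContinuous.rfl.add_right' P)]
      with ω hq hω
    obtain ⟨n, hn⟩ := exists_nat_gt (rnDerivReal P (P + Q) ω / rnDerivReal Q (P + Q) ω)
    exact ((div_lt_iff₀ hq).1 hn).not_gt (Set.mem_iInter.1 hω n)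
  have hlim : Tendsto (fun n ↦ P.real (A n)) atTop (𝓝 (P.real (⋂ n, A n))) :=
    (ENNReal.tendsto_toReal (measure_ne_top _ _)).comp <| tendsto_measure_iInter_atTop
      (fun n ↦ (hA n).nullMeasurableSet) hanti ⟨0, measure_ne_top _ _⟩
  have hbound (n : ℕ) : 1 - P.real (A n) ≤ t := by
    have hH := hockeyStick_eq_measureReal_sub P Q n
    have hQn : 0 ≤ (n : ℝ) * Q.real (A n) := mul_nonneg n.cast_nonneg measureReal_nonneg
    linarith [ht n]
  calc tradeOff Q P 0 ≤ 1 - P.real (⋂ n, A n) :=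
        tradeOff_le_one_sub_measureReal Q P (.iInter hA) (by simp [measureReal_def, hQ])
    _ ≤ t := le_of_tendsto' (tendsto_const_nhds.sub hlim) hbound

theorem tradeOff_le_of_forall_one_sub_mul_sub_hockeyStick_le {x t : ℝ}
    (hx : x ∈ Set.Icc (0 : ℝ) 1) (ht : ∀ α, 0 ≤ α → 1 - α * x - hockeyStick α P Q ≤ t) :
    tradeOff Q P x ≤ t := by
  rcases hx.1.eq_or_lt with rfl | hx₀
  · exact tradeOff_zero_le_of_forall_natCast P Q fun n ↦ by simpa using ht n n.cast_nonneg
  -- `q > 0` holds `Q`-a.e., so `Q` does not see the junk value of `p / q` where `q = 0`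
  set f : Ω → ℝ := fun ω ↦ rnDerivReal P (P + Q) ω / rnDerivReal Q (P + Q) ω
  have hq := ae_rnDerivReal_pos (Measure.AbsolutelyContinuous.rfl.add_right' (μ := Q) P)
  have hlt (β : ℝ) :
      Q {ω | β * rnDerivReal Q (P + Q) ω < rnDerivReal P (P + Q) ω} = Q {ω | β < f ω} :=
    measure_congr (hq.mono fun ω hω ↦ propext (lt_div_iff₀ hω).symm)
  have hle (β : ℝ) :
      Q {ω | β * rnDerivReal Q (P + Q) ω ≤ rnDerivReal P (P + Q) ω} = Q {ω | β ≤ f ω} :=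
    measure_congr (hq.mono fun ω hω ↦ propext (le_div_iff₀ hω).symm)
  obtain ⟨α, hα, hA, hC⟩ := exists_measure_lt_le_le_measure_le (Q := Q) (x := ENNReal.ofReal x)
    ((measurable_rnDerivReal _ _).div (measurable_rnDerivReal _ _))
    (fun ω ↦ div_nonneg (rnDerivReal_nonneg _ _ ω) (rnDerivReal_nonneg _ _ ω))
    (ENNReal.ofReal_pos.2 hx₀) (by simpa using hx.2)
  refine (tradeOff_le_one_sub_mul_sub_hockeyStick P Q ?_ ?_).trans (ht α hα)
  · exact ENNReal.toReal_le_of_le_ofReal hx.1 ((hlt α).trans_le hA)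
  · exact (ENNReal.ofReal_le_iff_le_toReal (measure_ne_top _ _)).1 (hC.trans (hle α).ge)

lemma exists_hockeyStick_le_one_sub_mul_sub_tradeOff (α : ℝ) :
    ∃ x ∈ Set.Icc (0 : ℝ) 1, hockeyStick α P Q ≤ 1 - α * x - tradeOff Q P x := by
  set A := {ω | α * rnDerivReal Q (P + Q) ω < rnDerivReal P (P + Q) ω}
  refine ⟨Q.real A, ⟨measureReal_nonneg, measureReal_le_one⟩, ?_⟩
  have := tradeOff_le_one_sub_measureReal Q P (measurableSet_mul_rnDerivReal_lt P Q α) le_rfl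
  rw [hockeyStick_eq_measureReal_sub]
  linarith

end NeymanPearson

section Dominance

variable {Ω' : Type*} [MeasurableSpace Ω'] {μ ν : Measure Ω} [IsProbabilityMeasure μ]
  [IsProbabilityMeasure ν] {P Q : Measure Ω'} [IsProbabilityMeasure P] [IsProbabilityMeasure Q]

lemma hockeyStick_swap_le_of_hockeyStick_le
    (h : ∀ α, 0 ≤ α → hockeyStick α μ ν ≤ hockeyStick α P Q) {α : ℝ} (hα : 0 ≤ α) :
    hockeyStick α ν μ ≤ hockeyStick α Q P := by
  rcases hα.eq_or_lt with rfl | hα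
  · rw [hockeyStick_zero, hockeyStick_zero]
  · rw [hockeyStick_eq_one_sub_add_mul_hockeyStick_swap ν μ hα,
      hockeyStick_eq_one_sub_add_mul_hockeyStick_swap Q P hα]
    gcongr
    exact h _ (inv_nonneg.2 hα.le)

lemma hockeyStick_swap_le_iff_tradeOff_le :
    (∀ α, 0 ≤ α → hockeyStick α ν μ ≤ hockeyStick α Q P) ↔
      ∀ x ∈ Set.Icc (0 : ℝ) 1, tradeOff P Q x ≤ tradeOff μ ν x := by
  refine ⟨fun h x hx ↦ ?_, fun h α hα ↦ ?_⟩
  · exact tradeOff_le_of_forall_one_sub_mul_sub_hockeyStick_le Q P hx fun α hα ↦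
      (sub_le_sub_left (h α hα) _).trans (one_sub_mul_sub_hockeyStick_le_tradeOff ν μ hα hx.1)
  · obtain ⟨x, hx, hle⟩ := exists_hockeyStick_le_one_sub_mul_sub_tradeOff ν μ α
    linarith [h x hx, one_sub_mul_sub_hockeyStick_le_tradeOff Q P hα hx.1]

end Dominance

end

/-- Duality between hockey-stick dominance and trade-off dominance: the following are
equivalent: (i) `H_α(μ‖ν) ≤ H_α(P‖Q)` for all `α ≥ 0`; (ii) `H_α(ν‖μ) ≤ H_α(Q‖P)` for all
`α ≥ 0`; (iii) `T[μ,ν] ≥ T[P,Q]` pointwise on `[0,1]`. -/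
theorem hockeyStick_tradeOff_duality
    {Ω Ω' : Type*} [MeasurableSpace Ω] [MeasurableSpace Ω']
    (μ ν : Measure Ω) [IsProbabilityMeasure μ] [IsProbabilityMeasure ν]
    (P Q : Measure Ω') [IsProbabilityMeasure P] [IsProbabilityMeasure Q] :
    ((∀ α : ℝ, 0 ≤ α → hockeyStick α μ ν ≤ hockeyStick α P Q)
      ↔ (∀ α : ℝ, 0 ≤ α → hockeyStick α ν μ ≤ hockeyStick α Q P))
    ∧ ((∀ α : ℝ, 0 ≤ α → hockeyStick α μ ν ≤ hockeyStick α P Q)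
      ↔ (∀ x ∈ Set.Icc (0:ℝ) 1, tradeOff P Q x ≤ tradeOff μ ν x)) := by
  have h : (∀ α : ℝ, 0 ≤ α → hockeyStick α μ ν ≤ hockeyStick α P Q)
      ↔ (∀ α : ℝ, 0 ≤ α → hockeyStick α ν μ ≤ hockeyStick α Q P) :=
    ⟨fun h _ ↦ hockeyStick_swap_le_of_hockeyStick_le h,
      fun h _ ↦ hockeyStick_swap_le_of_hockeyStick_le h⟩
  exact ⟨h, h.trans hockeyStick_swap_le_iff_tradeOff_le⟩
end

section
/- Hockey-stick divergence in terms of privacy-loss tail probabilities: let P, Q be mutually absolutely continuous probability measures and ε ∈ ℝ. Then H_{e^ε}(P‖Q) = P({ω : log((dP/dQ)(ω)) > ε}) − e^ε · Q({ω : log((dQ/dP)(ω)) < −ε}). Consequently, P(S) ≤ e^ε Q(S) + δ holds for every measurable set S if and only if P({log(dP/dQ) > ε}) − e^ε · Q({log(dQ/dP) < −ε}) ≤ δ. -/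
/-!
Write `p, q` for the densities of `P, Q` with respect to `P + Q` and `g = p - α q`. For every set
`S` one has `∫_S g = P(S) - α Q(S)`, so `P(S) - α Q(S) ≤ ∫ g⁺ = H_α(P‖Q)`, with equality for
`S = {g > 0}`. Since `p = (dP/dQ) q` with `0 < q < ∞` almost everywhere, `{g > 0}` is a.e. the event
`{dP/dQ > α}`, which for `α = e^ε` is `{log (dP/dQ) > ε} = {log (dQ/dP) < -ε}`.
-/

open MeasureTheory

lemma integral_max_zero_eq_setIntegral_pos {X : Type*} [MeasurableSpace X] {μ : Measure X}
    {f : X → ℝ} (hf : Measurable f) :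
    ∫ x, max (f x) 0 ∂μ = ∫ x in {x | 0 < f x}, f x ∂μ := by
  rw [← integral_indicator (measurableSet_lt measurable_const hf)]
  congr 1 with x
  by_cases hx : 0 < f x
  · simp [hx, hx.le]
  · simp [hx, not_lt.mp hx]

lemma setIntegral_le_integral_max_zero {X : Type*} [MeasurableSpace X] {μ : Measure X}
    {f : X → ℝ} (hf : Integrable f μ) (s : Set X) :
    ∫ x in s, f x ∂μ ≤ ∫ x, max (f x) 0 ∂μ :=
  calc ∫ x in s, f x ∂μ ≤ ∫ x in s, max (f x) 0 ∂μ :=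
        integral_mono hf.restrict hf.pos_part.restrict fun _ => le_max_left _ _
    _ ≤ ∫ x, max (f x) 0 ∂μ :=
        setIntegral_le_integral hf.pos_part (.of_forall fun _ => le_max_right _ _)

section HockeyStick

variable {Ω : Type*} [MeasurableSpace Ω] {P Q : Measure Ω}

def hockeyStickSet (α : ℝ) (P Q : Measure Ω) : Set Ω :=
  {ω | 0 < (P.rnDeriv (P + Q) ω).toReal - α * (Q.rnDeriv (P + Q) ω).toReal}

section Finite

variable [IsFiniteMeasure P] [IsFiniteMeasure Q]

lemma setIntegral_rnDeriv_sub (α : ℝ) (S : Set Ω) :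
    ∫ ω in S, (P.rnDeriv (P + Q) ω).toReal - α * (Q.rnDeriv (P + Q) ω).toReal ∂(P + Q)
      = P.real S - α * Q.real S := by
  rw [integral_sub Measure.integrable_toReal_rnDeriv.restrict
      (Measure.integrable_toReal_rnDeriv.restrict.const_mul α), integral_const_mul,
    Measure.setIntegral_toReal_rnDeriv (Measure.AbsolutelyContinuous.rfl.add_right Q),
    Measure.setIntegral_toReal_rnDeriv (Measure.AbsolutelyContinuous.rfl.add_right' P)]

lemma measureReal_sub_le_hockeyStick (α : ℝ) (S : Set Ω) :
    P.real S - α * Q.real S ≤ hockeyStick α P Q := by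
  rw [← setIntegral_rnDeriv_sub]
  exact setIntegral_le_integral_max_zero
    (Measure.integrable_toReal_rnDeriv.sub (Measure.integrable_toReal_rnDeriv.const_mul α)) S

lemma hockeyStick_eq_measureReal_hockeyStickSet_sub (α : ℝ) :
    hockeyStick α P Q = P.real (hockeyStickSet α P Q) - α * Q.real (hockeyStickSet α P Q) := by
  rw [hockeyStick, integral_max_zero_eq_setIntegral_pos (by fun_prop), ← setIntegral_rnDeriv_sub]
  rfl

lemma forall_measureReal_le_iff_hockeyStick_le (α δ : ℝ) :
    (∀ S, MeasurableSet S → P.real S ≤ α * Q.real S + δ) ↔ hockeyStick α P Q ≤ δ := by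
  refine ⟨fun h => ?_, fun h S _ => ?_⟩
  · have hS := h (hockeyStickSet α P Q) (measurableSet_lt measurable_const (by fun_prop))
    rw [hockeyStick_eq_measureReal_hockeyStickSet_sub]
    linarith
  · linarith [measureReal_sub_le_hockeyStick (P := P) (Q := Q) α S]

end Finite

section SigmaFinite

variable [SigmaFinite P] [SigmaFinite Q]

lemma hockeyStickSet_ae_eq_rnDeriv (hPQ : P ≪ Q) (α : ℝ) :
    hockeyStickSet α P Q =ᵐ[P + Q] {ω | α < (P.rnDeriv Q ω).toReal} := by
  have hQ_pos : ∀ᵐ ω ∂(P + Q), 0 < Q.rnDeriv (P + Q) ω := by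
    have hQ := Measure.rnDeriv_pos ((Measure.AbsolutelyContinuous.rfl (μ := Q)).add_right' P)
    exact ae_add_measure_iff.2 ⟨hPQ.ae_le hQ, hQ⟩
  filter_upwards [hQ_pos, Measure.rnDeriv_lt_top Q (P + Q), Measure.rnDeriv_mul_rnDeriv hPQ]
    with ω hpos hlt hmul
  have hq : 0 < (Q.rnDeriv (P + Q) ω).toReal := ENNReal.toReal_pos hpos.ne' hlt.ne
  change (0 < _ - α * _) = (α < _)
  rw [sub_pos, ← hmul, Pi.mul_apply, ENNReal.toReal_mul, mul_lt_mul_iff_of_pos_right hq]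

lemma toReal_rnDeriv_pos_ae_add (hPQ : P ≪ Q) (hQP : Q ≪ P) :
    ∀ᵐ ω ∂(P + Q), 0 < (P.rnDeriv Q ω).toReal := by
  have hpos := Measure.rnDeriv_pos hPQ
  have hlt := hPQ.ae_le (Measure.rnDeriv_lt_top P Q)
  refine ae_add_measure_iff.2 ⟨?_, hQP.ae_le ?_⟩ <;>
  filter_upwards [hpos, hlt] with ω h0 htop using ENNReal.toReal_pos h0.ne' htop.ne

lemma inv_rnDeriv_ae_add (hPQ : P ≪ Q) (hQP : Q ≪ P) :
    (P.rnDeriv Q)⁻¹ =ᵐ[P + Q] Q.rnDeriv P := by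
  refine ae_add_measure_iff.2 ⟨Measure.inv_rnDeriv hPQ, ?_⟩
  filter_upwards [Measure.inv_rnDeriv hQP] with ω h
  rw [Pi.inv_apply, ← h, Pi.inv_apply, inv_inv]

lemma hockeyStickSet_exp_ae_eq_log_rnDeriv (hPQ : P ≪ Q) (hQP : Q ≪ P) (ε : ℝ) :
    hockeyStickSet (Real.exp ε) P Q =ᵐ[P + Q] {ω | ε < Real.log (P.rnDeriv Q ω).toReal} := by
  refine (hockeyStickSet_ae_eq_rnDeriv hPQ _).trans ?_
  filter_upwards [toReal_rnDeriv_pos_ae_add hPQ hQP] with ω hpos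
  exact propext (Real.lt_log_iff_exp_lt hpos).symm

lemma hockeyStickSet_exp_ae_eq_log_rnDeriv_symm (hPQ : P ≪ Q) (hQP : Q ≪ P) (ε : ℝ) :
    hockeyStickSet (Real.exp ε) P Q =ᵐ[P + Q] {ω | Real.log (Q.rnDeriv P ω).toReal < -ε} := by
  refine (hockeyStickSet_exp_ae_eq_log_rnDeriv hPQ hQP ε).trans ?_
  filter_upwards [inv_rnDeriv_ae_add hPQ hQP] with ω hinv
  change (ε < _) = (_ < -ε)
  rw [← hinv, Pi.inv_apply, ENNReal.toReal_inv, Real.log_inv, neg_lt_neg_iff]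

end SigmaFinite

end HockeyStick

/-- Hockey-stick divergence in terms of privacy-loss tail probabilities:
`H_{e^ε}(P‖Q) = P(log(dP/dQ) > ε) − e^ε · Q(log(dQ/dP) < −ε)`; consequently
`P(S) ≤ e^ε Q(S) + δ` holds for every measurable `S` iff this quantity is at most `δ`. -/
theorem hockeyStick_tail_probabilities
    {Ω : Type*} [MeasurableSpace Ω]
    (P Q : Measure Ω) [IsProbabilityMeasure P] [IsProbabilityMeasure Q]
    (hPQ : P ≪ Q) (hQP : Q ≪ P) (ε : ℝ) :
    hockeyStick (Real.exp ε) P Q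
      = (P {ω | ε < Real.log ((P.rnDeriv Q ω).toReal)}).toReal
        - Real.exp ε * (Q {ω | Real.log ((Q.rnDeriv P ω).toReal) < -ε}).toReal
    ∧ ∀ δ : ℝ,
        ((∀ S : Set Ω, MeasurableSet S →
            (P S).toReal ≤ Real.exp ε * (Q S).toReal + δ)
          ↔ (P {ω | ε < Real.log ((P.rnDeriv Q ω).toReal)}).toReal
              - Real.exp ε * (Q {ω | Real.log ((Q.rnDeriv P ω).toReal) < -ε}).toReal ≤ δ) := by
  have hP : P.real (hockeyStickSet (Real.exp ε) P Q)
      = P.real {ω | ε < Real.log (P.rnDeriv Q ω).toReal} :=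
    measureReal_congr (ae_add_measure_iff.1 (hockeyStickSet_exp_ae_eq_log_rnDeriv hPQ hQP ε)).1
  have hQ : Q.real (hockeyStickSet (Real.exp ε) P Q)
      = Q.real {ω | Real.log (Q.rnDeriv P ω).toReal < -ε} :=
    measureReal_congr
      (ae_add_measure_iff.1 (hockeyStickSet_exp_ae_eq_log_rnDeriv_symm hPQ hQP ε)).2
  simp only [← measureReal_def]
  rw [← hP, ← hQ, ← hockeyStick_eq_measureReal_hockeyStickSet_sub]
  exact ⟨rfl, fun δ => forall_measureReal_le_iff_hockeyStick_le _ δ⟩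
end
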